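/- Fix ω₁, ω₂ ∈ ℂ∖{0} with Im(ω₁/ω₂) > 0, set q = exp(πiω₁/ω₂), q̃ = exp(πiω₂/ω₁); let B(z) = z²/(ω₁ω₂) − (ω₁+ω₂)z/(ω₁ω₂) + (ω₁²+3ω₁ω₂+ω₂²)/(6ω₁ω₂), 𝒮(z) = (∏_{m=0}^∞ (1 − q^{2m}·e^{2πiz/ω₂})) / (∏_{m=1}^∞ (1 − q̃^{−2m}·e^{2πiz/ω₁})), S₂(z) = e^{(πi/2)B(z)}·𝒮(z). Let g > 0, g^w := exp(w·ln g), and define the quantum Harish-Chandra function c(ζ) = g^{iζ}·(ω₁ω₂)^{−1/2}·S₂(−iζ)⁻¹ (principal branch of the square root). For N ≥ 2, γ = (γ₁,…,γ_{N−1}) ∈ ℂ^{N−1} and λ = (λ₁,…,λ_N) ∈ ℂ^N, set Q(γ|λ) = ∏_{j=1}^{N−1} ∏_{n=1}^{N} c(γⱼ − λₙ). Assume that for all j, n the values 𝒮(−i(γⱼ−λₙ)), 𝒮(−i(γⱼ−λₙ)+ω₁) and 𝒮(−i(γⱼ−λₙ)+ω₂) are defined (all denominator factors nonzero) and nonzero.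 Then for each j = 1,…,N−1 and each n = 1,…,N the Baxter-type difference equations hold (eⱼ, e'ₙ the standard basis vectors of ℂ^{N−1}, ℂ^N): (i) i^N·Q(γ + iω₁eⱼ|λ) = (g^{ω₁}/2)^{−N}·(∏_{k=1}^N sinh(π(γⱼ−λₖ)/ω₂))·Q(γ|λ); (ii) i^N·Q(γ + iω₂eⱼ|λ) = (g^{ω₂}/2)^{−N}·(∏_{k=1}^N sinh(π(γⱼ−λₖ)/ω₁))·Q(γ|λ); (iii) i^{N−1}·Q(γ|λ − iω₁e'ₙ) = (g^{ω₁}/2)^{−N+1}·(∏_{j=1}^{N−1} sinh(π(γⱼ−λₙ)/ω₂))·Q(γ|λ). -/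

import Mathlib

/-- `qparam ω₁ ω₂ = exp(πi·ω₁/ω₂)`; then `q = qparam ω₁ ω₂` and
`q̃ = qparam ω₂ ω₁`. -/
noncomputable def qparam (ω₁ ω₂ : ℂ) : ℂ :=
  Complex.exp ((Real.pi : ℂ) * Complex.I * ω₁ / ω₂)

/-- The function `𝒮(z) = ∏_{m≥0}(1 − q^{2m}·e^{2πiz/ω₂}) / ∏_{m≥1}(1 − q̃^{−2m}·e^{2πiz/ω₁})`. -/
noncomputable def Sfun (ω₁ ω₂ z : ℂ) : ℂ :=
  (∏' m : ℕ, (1 - qparam ω₁ ω₂ ^ (2 * m) *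
      Complex.exp (2 * (Real.pi : ℂ) * Complex.I * z / ω₂))) /
  (∏' m : ℕ, (1 - qparam ω₂ ω₁ ^ (-(2 * ((m : ℤ) + 1))) *
      Complex.exp (2 * (Real.pi : ℂ) * Complex.I * z / ω₁)))

/-- The Bernoulli-type polynomial `B₂,₂(z|ω₁,ω₂)`. -/
noncomputable def B22 (ω₁ ω₂ z : ℂ) : ℂ :=
  z ^ 2 / (ω₁ * ω₂) - (ω₁ + ω₂) * z / (ω₁ * ω₂)
    + (ω₁ ^ 2 + 3 * ω₁ * ω₂ + ω₂ ^ 2) / (6 * (ω₁ * ω₂))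

/-- The double sine function `S₂(z) = e^{(πi/2)·B₂,₂(z)}·𝒮(z)`. -/
noncomputable def doubleSine (ω₁ ω₂ z : ℂ) : ℂ :=
  Complex.exp ((Real.pi : ℂ) * Complex.I / 2 * B22 ω₁ ω₂ z) * Sfun ω₁ ω₂ z

/-- The quantum Harish-Chandra function
`c(ζ) = g^{iζ}·(ω₁ω₂)^{−1/2}·S₂(−iζ)⁻¹` (principal branch). -/
noncomputable def quantumHC (ω₁ ω₂ : ℂ) (g : ℝ) (ζ : ℂ) : ℂ :=
  Complex.exp (Complex.I * ζ * (Real.log g : ℂ)) * (ω₁ * ω₂) ^ (-(1 / 2 : ℂ)) *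
    (doubleSine ω₁ ω₂ (-(Complex.I * ζ)))⁻¹

/-- The kernel `Q(γ|λ) = ∏_{j=1}^{N−1} ∏_{n=1}^N c(γⱼ − λₙ)` of the
Mellin–Barnes integral representation. -/
noncomputable def QKernel (ω₁ ω₂ : ℂ) (g : ℝ) {N : ℕ}
    (γ : Fin (N - 1) → ℂ) (lam : Fin N → ℂ) : ℂ :=
  ∏ j : Fin (N - 1), ∏ n : Fin N, quantumHC ω₁ ω₂ g (γ j - lam n)

/-! Shifting `z` by `ω₁` multiplies `e^{2πiz/ω₂}` by `q²` and leaves `e^{2πiz/ω₁}` fixed, so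
the numerator of `𝒮` loses its first factor by `(w; a)_∞ = (1 - w)(aw; a)_∞`; shifting by `ω₂`
does the same to the denominator. The quadratic `B₂,₂` supplies exactly the phase turning
`1 - e^{2πiz/ω}` into `2 sin(πz/ω)`, so `S₂(z + ω₁)·2 sin(πz/ω₂) = S₂(z)` and symmetrically.
For `c` this reads `i·c(ζ + iω) = (g^ω/2)⁻¹ sinh(πζ/ω')·c(ζ)`, and shifting one variable of `Q`
multiplies it by these factors over all entries of the other variable. -/

open Complex
open scoped Real

/-- The infinite `q`-Pochhammer symbol `(w; a)_∞`. -/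
noncomputable def qPochhammerInf (w a : ℂ) : ℂ :=
  ∏' m : ℕ, (1 - a ^ m * w)

lemma multipliable_one_sub_pow_mul {a : ℂ} (w : ℂ) (ha : ‖a‖ < 1) :
    Multipliable fun m : ℕ => 1 - a ^ m * w := by
  simpa only [sub_eq_add_neg] using
    Complex.multipliable_one_add_of_summable
      ((summable_geometric_of_norm_lt_one ha).mul_right w).neg

lemma qPochhammerInf_eq_one_sub_mul {a : ℂ} (w : ℂ) (ha : ‖a‖ < 1) :
    qPochhammerInf w a = (1 - w) * qPochhammerInf (a * w) a := by
  have h : Multipliable fun m : ℕ => 1 - a ^ (m + 1) * w :=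
    (multipliable_one_sub_pow_mul (a * w) ha).congr fun m => by ring
  unfold qPochhammerInf
  rw [tprod_eq_zero_mul' (f := fun m : ℕ => 1 - a ^ m * w) h, pow_zero, one_mul]
  exact congrArg _ (tprod_congr fun m => by ring)

lemma ne_zero_of_im_div_pos {ω₁ ω₂ : ℂ} (him : 0 < (ω₁ / ω₂).im) : ω₁ ≠ 0 ∧ ω₂ ≠ 0 :=
  div_ne_zero_iff.mp fun h => by simp [h] at him

lemma qparam_ne_zero (ω ω' : ℂ) : qparam ω ω' ≠ 0 :=
  exp_ne_zero _

lemma qparam_sq (ω ω' : ℂ) : qparam ω ω' ^ 2 = exp (2 * π * I * (ω / ω')) := by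
  rw [qparam, ← exp_nat_mul]
  ring_nf

lemma norm_qparam_sq_lt_one {ω₁ ω₂ : ℂ} (him : 0 < (ω₁ / ω₂).im) :
    ‖qparam ω₁ ω₂ ^ 2‖ < 1 := by
  rw [qparam_sq]
  exact UpperHalfPlane.norm_exp_two_pi_I_lt_one ⟨_, him⟩

-- `q̃⁻²` has modulus `< 1` because `-ω₂/ω₁ = -(ω₁/ω₂)⁻¹` lies in the upper half-plane.
lemma norm_inv_qparam_sq_lt_one {ω₁ ω₂ : ℂ} (him : 0 < (ω₁ / ω₂).im) :
    ‖(qparam ω₂ ω₁ ^ 2)⁻¹‖ < 1 := by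
  have him' : 0 < (-(ω₁ / ω₂)⁻¹).im := by
    rw [neg_im, inv_im, neg_div, neg_neg]
    exact div_pos him (normSq_pos.mpr fun h => by simp [h] at him)
  rw [qparam_sq, ← exp_neg, show -(2 * π * I * (ω₂ / ω₁)) = 2 * π * I * -(ω₁ / ω₂)⁻¹ by
    rw [inv_div]; ring]
  exact UpperHalfPlane.norm_exp_two_pi_I_lt_one ⟨_, him'⟩

lemma exp_two_pi_I_mul_add {ω : ℂ} (hω : ω ≠ 0) (z ω' : ℂ) :
    exp (2 * π * I * (z + ω') / ω) = qparam ω' ω ^ 2 * exp (2 * π * I * z / ω) := by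
  rw [qparam_sq, ← exp_add]
  congr 1
  field_simp
  ring

lemma exp_two_pi_I_mul_add_self {ω : ℂ} (hω : ω ≠ 0) (z : ℂ) :
    exp (2 * π * I * (z + ω) / ω) = exp (2 * π * I * z / ω) := by
  rw [exp_two_pi_I_mul_add hω, qparam_sq, div_self hω, mul_one, exp_two_pi_mul_I, one_mul]

lemma Sfun_eq_div (ω₁ ω₂ z : ℂ) :
    Sfun ω₁ ω₂ z =
      qPochhammerInf (exp (2 * π * I * z / ω₂)) (qparam ω₁ ω₂ ^ 2) /
        qPochhammerInf ((qparam ω₂ ω₁ ^ 2)⁻¹ * exp (2 * π * I * z / ω₁))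
          (qparam ω₂ ω₁ ^ 2)⁻¹ := by
  have hden (m : ℕ) : qparam ω₂ ω₁ ^ (-(2 * ((m : ℤ) + 1)))
      = ((qparam ω₂ ω₁ ^ 2)⁻¹) ^ m * (qparam ω₂ ω₁ ^ 2)⁻¹ := by
    rw [← pow_succ, inv_pow, ← pow_mul, ← zpow_natCast, ← zpow_neg]
    push_cast
    ring_nf
  rw [Sfun, qPochhammerInf, qPochhammerInf]
  congr 1
  · exact tprod_congr fun m => by rw [pow_mul]
  · exact tprod_congr fun m => by rw [hden, mul_assoc]

lemma Sfun_add_left {ω₁ ω₂ : ℂ} (him : 0 < (ω₁ / ω₂).im) (z : ℂ) :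
    Sfun ω₁ ω₂ (z + ω₁) * (1 - exp (2 * π * I * z / ω₂)) = Sfun ω₁ ω₂ z := by
  obtain ⟨hω₁, hω₂⟩ := ne_zero_of_im_div_pos him
  rw [Sfun_eq_div, Sfun_eq_div, exp_two_pi_I_mul_add_self hω₁, exp_two_pi_I_mul_add hω₂,
    qPochhammerInf_eq_one_sub_mul (exp (2 * π * I * z / ω₂)) (norm_qparam_sq_lt_one him)]
  ring

lemma Sfun_add_right {ω₁ ω₂ : ℂ} (him : 0 < (ω₁ / ω₂).im) (z : ℂ)
    (hz : 1 - exp (2 * π * I * z / ω₁) ≠ 0) :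
    Sfun ω₁ ω₂ (z + ω₂) * (1 - exp (2 * π * I * z / ω₁)) = Sfun ω₁ ω₂ z := by
  obtain ⟨hω₁, hω₂⟩ := ne_zero_of_im_div_pos him
  rw [Sfun_eq_div, Sfun_eq_div, exp_two_pi_I_mul_add_self hω₂, exp_two_pi_I_mul_add hω₁,
    inv_mul_cancel_left₀ (pow_ne_zero 2 (qparam_ne_zero ω₂ ω₁)),
    qPochhammerInf_eq_one_sub_mul (exp (2 * π * I * z / ω₁)) (norm_inv_qparam_sq_lt_one him)]
  field_simp

lemma B22_comm (ω₁ ω₂ z : ℂ) : B22 ω₁ ω₂ z = B22 ω₂ ω₁ z := by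
  unfold B22
  ring

lemma B22_add_left {ω₁ ω₂ : ℂ} (hω₁ : ω₁ ≠ 0) (hω₂ : ω₂ ≠ 0) (z : ℂ) :
    B22 ω₁ ω₂ (z + ω₁) = B22 ω₁ ω₂ z + (2 * z / ω₂ - 1) := by
  unfold B22
  field_simp
  ring

lemma exp_sub_mul_two_sin (x : ℂ) :
    exp (x * I - π / 2 * I) * (2 * sin x) = 1 - exp (2 * x * I) := by
  rw [exp_sub, exp_mul_I (π / 2), cos_pi_div_two, sin_pi_div_two, sin,
    show 2 * x * I = x * I + x * I by ring, exp_add, neg_mul, exp_neg]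
  field_simp
  ring

lemma doubleSine_add_of_Sfun_add {ω₁ ω₂ ω ω' z : ℂ}
    (hB : B22 ω₁ ω₂ (z + ω) = B22 ω₁ ω₂ z + (2 * z / ω' - 1))
    (hS : Sfun ω₁ ω₂ (z + ω) * (1 - exp (2 * π * I * z / ω')) = Sfun ω₁ ω₂ z) :
    doubleSine ω₁ ω₂ (z + ω) * (2 * sin (π * z / ω')) = doubleSine ω₁ ω₂ z := by
  have hsin := exp_sub_mul_two_sin (π * z / ω')
  rw [show 2 * (π * z / ω') * I = 2 * π * I * z / ω' by ring] at hsin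
  rw [doubleSine, doubleSine, hB, ← hS, ← hsin,
    show π * I / 2 * (B22 ω₁ ω₂ z + (2 * z / ω' - 1))
      = π * I / 2 * B22 ω₁ ω₂ z + (π * z / ω' * I - π / 2 * I) by ring, exp_add]
  ring

lemma doubleSine_add_left {ω₁ ω₂ : ℂ} (him : 0 < (ω₁ / ω₂).im) (z : ℂ) :
    doubleSine ω₁ ω₂ (z + ω₁) * (2 * sin (π * z / ω₂)) = doubleSine ω₁ ω₂ z := by
  obtain ⟨hω₁, hω₂⟩ := ne_zero_of_im_div_pos him
  exact doubleSine_add_of_Sfun_add (B22_add_left hω₁ hω₂ z) (Sfun_add_left him z)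

lemma doubleSine_add_right {ω₁ ω₂ : ℂ} (him : 0 < (ω₁ / ω₂).im) (z : ℂ)
    (hz : 1 - exp (2 * π * I * z / ω₁) ≠ 0) :
    doubleSine ω₁ ω₂ (z + ω₂) * (2 * sin (π * z / ω₁)) = doubleSine ω₁ ω₂ z := by
  obtain ⟨hω₁, hω₂⟩ := ne_zero_of_im_div_pos him
  refine doubleSine_add_of_Sfun_add ?_ (Sfun_add_right him z hz)
  rw [B22_comm, B22_add_left hω₂ hω₁, B22_comm]

lemma quantumHC_add_I_mul_of_doubleSine {ω₁ ω₂ ω ω' : ℂ} (g : ℝ) (ζ : ℂ)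
    (hds : doubleSine ω₁ ω₂ (-(I * ζ) + ω) * (2 * sin (π * -(I * ζ) / ω'))
      = doubleSine ω₁ ω₂ (-(I * ζ)))
    (hS : Sfun ω₁ ω₂ (-(I * ζ)) ≠ 0) :
    I * quantumHC ω₁ ω₂ g (ζ + I * ω)
      = (exp (ω * Real.log g) / 2)⁻¹ * sinh (π * ζ / ω') * quantumHC ω₁ ω₂ g ζ := by
  have hS₂ : doubleSine ω₁ ω₂ (-(I * ζ)) ≠ 0 := mul_ne_zero (exp_ne_zero _) hS
  have hinv : (doubleSine ω₁ ω₂ (-(I * ζ) + ω))⁻¹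
      = 2 * sin (π * -(I * ζ) / ω') * (doubleSine ω₁ ω₂ (-(I * ζ)))⁻¹ :=
    inv_eq_of_mul_eq_one_right (by rw [← mul_assoc, hds, mul_inv_cancel₀ hS₂])
  have hsin : sin (π * -(I * ζ) / ω') = -(sinh (π * ζ / ω') * I) := by
    rw [show π * -(I * ζ) / ω' = -(π * ζ / ω') * I by ring, sin_mul_I, sinh_neg, neg_mul]
  have harg : -(I * (ζ + I * ω)) = -(I * ζ) + ω := by
    linear_combination (-ω) * I_sq
  have hexp : exp (I * (ζ + I * ω) * Real.log g)
      = exp (I * ζ * Real.log g) * (exp (ω * Real.log g))⁻¹ := by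
    rw [← exp_neg, ← exp_add]
    congr 1
    linear_combination (ω * Real.log g) * I_sq
  rw [quantumHC, quantumHC, harg, hexp, hinv, hsin]
  linear_combination (-2 * sinh (π * ζ / ω') * exp (I * ζ * Real.log g)
    * (exp (ω * Real.log g))⁻¹ * (ω₁ * ω₂) ^ (-(1 / 2 : ℂ))
    * (doubleSine ω₁ ω₂ (-(I * ζ)))⁻¹) * I_sq

lemma mul_prod_update_of_mul_eq {ι α M : Type*} [Fintype ι] [DecidableEq ι] [CommMonoid M]
    (F : α → M) (γ : ι → α) (j : ι) (v : α) {c d : M} (h : c * F v = d * F (γ j)) :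
    c * ∏ i, F (Function.update γ j v i) = d * ∏ i, F (γ i) := by
  rw [← Finset.mul_prod_erase _ _ (Finset.mem_univ j),
    ← Finset.mul_prod_erase _ (fun i => F (γ i)) (Finset.mem_univ j), Function.update_self,
    ← mul_assoc, h, mul_assoc]
  congr 2
  exact Finset.prod_congr rfl fun i hi => by rw [Function.update_of_ne (Finset.ne_of_mem_erase hi)]

lemma pow_card_mul_prod_eq {ι M : Type*} [Fintype ι] [CommMonoid M] {a b : M} {f s g : ι → M}
    (h : ∀ i, a * f i = b * s i * g i) :
    a ^ Fintype.card ι * ∏ i, f i = b ^ Fintype.card ι * (∏ i, s i) * ∏ i, g i := by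
  rw [← Finset.card_univ, ← Finset.prod_const, ← Finset.prod_const, ← Finset.prod_mul_distrib,
    ← Finset.prod_mul_distrib, ← Finset.prod_mul_distrib]
  exact Finset.prod_congr rfl fun i _ => h i

section QKernel

variable {ω₁ ω₂ ω ω' : ℂ} {g : ℝ} {N : ℕ} (γ : Fin (N - 1) → ℂ) (lam : Fin N → ℂ)

lemma QKernel_shift_gamma (j : Fin (N - 1))
    (hc : ∀ k, I * quantumHC ω₁ ω₂ g (γ j - lam k + I * ω)
      = (exp (ω * Real.log g) / 2)⁻¹ * sinh (π * (γ j - lam k) / ω')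
        * quantumHC ω₁ ω₂ g (γ j - lam k)) :
    I ^ N * QKernel ω₁ ω₂ g (Function.update γ j (γ j + I * ω)) lam
      = (exp (ω * Real.log g) / 2) ^ (-(N : ℤ)) * (∏ k, sinh (π * (γ j - lam k) / ω'))
        * QKernel ω₁ ω₂ g γ lam := by
  have hrow := pow_card_mul_prod_eq hc
  rw [Fintype.card_fin] at hrow
  simp_rw [← add_sub_right_comm] at hrow
  rw [zpow_neg, zpow_natCast, ← inv_pow]
  exact mul_prod_update_of_mul_eq (fun x => ∏ k, quantumHC ω₁ ω₂ g (x - lam k)) γ j _ hrow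

lemma QKernel_shift_lam (n : Fin N)
    (hc : ∀ j, I * quantumHC ω₁ ω₂ g (γ j - lam n + I * ω)
      = (exp (ω * Real.log g) / 2)⁻¹ * sinh (π * (γ j - lam n) / ω')
        * quantumHC ω₁ ω₂ g (γ j - lam n)) :
    I ^ (N - 1) * QKernel ω₁ ω₂ g γ (Function.update lam n (lam n - I * ω))
      = (exp (ω * Real.log g) / 2) ^ (-(N : ℤ) + 1) * (∏ j, sinh (π * (γ j - lam n) / ω'))
        * QKernel ω₁ ω₂ g γ lam := by
  have hrow := pow_card_mul_prod_eq hc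
  rw [Fintype.card_fin] at hrow
  simp_rw [← add_sub_right_comm, ← sub_sub_eq_add_sub] at hrow
  have hexp : -(N : ℤ) + 1 = -((N - 1 : ℕ) : ℤ) := by
    have := n.pos
    omega
  rw [hexp, zpow_neg, zpow_natCast, ← inv_pow, QKernel, QKernel, Finset.prod_comm,
    Finset.prod_comm (f := fun j k => quantumHC ω₁ ω₂ g (γ j - lam k))]
  exact mul_prod_update_of_mul_eq (fun y => ∏ j, quantumHC ω₁ ω₂ g (γ j - y)) lam n _ hrow

end QKernel

theorem QKernel_baxter_equations_general (ω₁ ω₂ : ℂ)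
    (him : 0 < (ω₁ / ω₂).im) (g : ℝ)
    (N : ℕ) (γ : Fin (N - 1) → ℂ) (lam : Fin N → ℂ)
    (hS : ∀ (j : Fin (N - 1)) (n : Fin N),
      ∀ w ∈ ({-(Complex.I * (γ j - lam n)),
              -(Complex.I * (γ j - lam n)) + ω₁,
              -(Complex.I * (γ j - lam n)) + ω₂} : Set ℂ),
        (∀ m : ℕ, 1 ≤ m →
          1 - qparam ω₂ ω₁ ^ (-(2 * (m : ℤ))) *
            Complex.exp (2 * (Real.pi : ℂ) * Complex.I * w / ω₁) ≠ 0) ∧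
        Sfun ω₁ ω₂ w ≠ 0) :
    ∀ (j : Fin (N - 1)) (n : Fin N),
      (Complex.I ^ N * QKernel ω₁ ω₂ g (Function.update γ j (γ j + Complex.I * ω₁)) lam
        = (Complex.exp (ω₁ * (Real.log g : ℂ)) / 2) ^ (-(N : ℤ)) *
            (∏ k : Fin N, Complex.sinh ((Real.pi : ℂ) * (γ j - lam k) / ω₂)) *
            QKernel ω₁ ω₂ g γ lam) ∧
      (Complex.I ^ N * QKernel ω₁ ω₂ g (Function.update γ j (γ j + Complex.I * ω₂)) lam
        = (Complex.exp (ω₂ * (Real.log g : ℂ)) / 2) ^ (-(N : ℤ)) *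
            (∏ k : Fin N, Complex.sinh ((Real.pi : ℂ) * (γ j - lam k) / ω₁)) *
            QKernel ω₁ ω₂ g γ lam) ∧
      (Complex.I ^ (N - 1) * QKernel ω₁ ω₂ g γ (Function.update lam n (lam n - Complex.I * ω₁))
        = (Complex.exp (ω₁ * (Real.log g : ℂ)) / 2) ^ (-(N : ℤ) + 1) *
            (∏ j' : Fin (N - 1), Complex.sinh ((Real.pi : ℂ) * (γ j' - lam n) / ω₂)) *
            QKernel ω₁ ω₂ g γ lam) := by
  intro j n
  obtain ⟨hω₁, -⟩ := ne_zero_of_im_div_pos him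
  have hSfun (j : Fin (N - 1)) (k : Fin N) : Sfun ω₁ ω₂ (-(I * (γ j - lam k))) ≠ 0 :=
    (hS j k _ (Set.mem_insert _ _)).2
  have hden (j : Fin (N - 1)) (k : Fin N) :
      1 - exp (2 * π * I * -(I * (γ j - lam k)) / ω₁) ≠ 0 := by
    -- the `m = 1` denominator factor of `𝒮(z + ω₂)` is `1 - e^{2πiz/ω₁}`
    have h := (hS j k (-(I * (γ j - lam k)) + ω₂) (by simp)).1 1 le_rfl
    simpa [exp_two_pi_I_mul_add hω₁, qparam_ne_zero] using h
  refine ⟨QKernel_shift_gamma γ lam j fun k => ?_, QKernel_shift_gamma γ lam j fun k => ?_,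
    QKernel_shift_lam γ lam n fun j' => ?_⟩
  · exact quantumHC_add_I_mul_of_doubleSine g _ (doubleSine_add_left him _) (hSfun j k)
  · exact quantumHC_add_I_mul_of_doubleSine g _ (doubleSine_add_right him _ (hden j k))
      (hSfun j k)
  · exact quantumHC_add_I_mul_of_doubleSine g _ (doubleSine_add_left him _) (hSfun j' n)

/-- The kernel `Q(γ|λ)` satisfies the Baxter-type difference equations in
both sets of variables (`γ`-shifts by `iω₁` and `iω₂`, and `λ`-shifts by
`−iω₁`). -/
theorem QKernel_baxter_equations (ω₁ ω₂ : ℂ) (hω₁ : ω₁ ≠ 0) (hω₂ : ω₂ ≠ 0)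
    (him : 0 < (ω₁ / ω₂).im) (g : ℝ) (hg : 0 < g)
    (N : ℕ) (hN : 2 ≤ N) (γ : Fin (N - 1) → ℂ) (lam : Fin N → ℂ)
    (hS : ∀ (j : Fin (N - 1)) (n : Fin N),
      ∀ w ∈ ({-(Complex.I * (γ j - lam n)),
              -(Complex.I * (γ j - lam n)) + ω₁,
              -(Complex.I * (γ j - lam n)) + ω₂} : Set ℂ),
        (∀ m : ℕ, 1 ≤ m →
          1 - qparam ω₂ ω₁ ^ (-(2 * (m : ℤ))) *
            Complex.exp (2 * (Real.pi : ℂ) * Complex.I * w / ω₁) ≠ 0) ∧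
        Sfun ω₁ ω₂ w ≠ 0) :
    ∀ (j : Fin (N - 1)) (n : Fin N),
      (Complex.I ^ N * QKernel ω₁ ω₂ g (Function.update γ j (γ j + Complex.I * ω₁)) lam
        = (Complex.exp (ω₁ * (Real.log g : ℂ)) / 2) ^ (-(N : ℤ)) *
            (∏ k : Fin N, Complex.sinh ((Real.pi : ℂ) * (γ j - lam k) / ω₂)) *
            QKernel ω₁ ω₂ g γ lam) ∧
      (Complex.I ^ N * QKernel ω₁ ω₂ g (Function.update γ j (γ j + Complex.I * ω₂)) lam
        = (Complex.exp (ω₂ * (Real.log g : ℂ)) / 2) ^ (-(N : ℤ)) *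
            (∏ k : Fin N, Complex.sinh ((Real.pi : ℂ) * (γ j - lam k) / ω₁)) *
            QKernel ω₁ ω₂ g γ lam) ∧
      (Complex.I ^ (N - 1) * QKernel ω₁ ω₂ g γ (Function.update lam n (lam n - Complex.I * ω₁))
        = (Complex.exp (ω₁ * (Real.log g : ℂ)) / 2) ^ (-(N : ℤ) + 1) *
            (∏ j' : Fin (N - 1), Complex.sinh ((Real.pi : ℂ) * (γ j' - lam n) / ω₂)) *
            QKernel ω₁ ω₂ g γ lam) :=
  QKernel_baxter_equations_general ω₁ ω₂ him g N γ lam hS
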